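/- arXiv:1201.0306 — 6 statements merged into one kernel-verified Lean document; each statement's English description precedes it below -/
import Mathlib

section
/- Let f, h : ℝ^p → ℝ be convex, let β̂ ∈ ℝ^p, let β̃_h ∈ ℝ^p, let s_h ∈ ∂h(β̃_h), and define h̃(β) = h(β̃_h) + ⟨s_h, β − β̃_h⟩. Suppose β̃_f minimizes β ↦ f(β) + h̃(β) + ½‖β − β̂‖²_D over ℝ^p, let γ ∈ (0,1), and suppose the update test holds: f(β̃_f) + h(β̃_f) ≤ (1 − γ)[f(β̂) + h(β̂)] + γ[f(β̃_f) + h̃(β̃_f)]. Then f(β̃_f) + h(β̃_f) ≤ f(β̂) + h(β̂) − (γ/2)‖β̃_f − β̂‖²_D; in particular the update step of the alternating linearization method does not increase the objective value f + h. -/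
/-- If `β̃_f` minimizes `f + h̃ + ½‖·−β̂‖²_D` (with `h̃` the linearization of `h`
at `β̃_h` via a subgradient `s_h`), `γ ∈ (0,1)`, and the update test
`f(β̃_f)+h(β̃_f) ≤ (1−γ)[f(β̂)+h(β̂)] + γ[f(β̃_f)+h̃(β̃_f)]` holds, then
`f(β̃_f)+h(β̃_f) ≤ f(β̂)+h(β̂) − (γ/2)‖β̃_f−β̂‖²_D`; in particular the update step does not
increase the objective value `f + h`. -/
theorem stmt1 {p : ℕ} (f h : (Fin p → ℝ) → ℝ)
    (hf : ConvexOn ℝ Set.univ f) (hh : ConvexOn ℝ Set.univ h)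
    (d : Fin p → ℝ) (hd : ∀ j, 0 < d j)
    (βhat βth sh βtf : Fin p → ℝ) (γ : ℝ) (hγ : γ ∈ Set.Ioo (0:ℝ) 1)
    (hsub : ∀ y : Fin p → ℝ, h βth + ∑ j, sh j * (y j - βth j) ≤ h y)
    (hmin : ∀ β : Fin p → ℝ,
      f βtf + (h βth + ∑ j, sh j * (βtf j - βth j))
          + (1/2) * ∑ j, d j * (βtf j - βhat j)^2
        ≤ f β + (h βth + ∑ j, sh j * (β j - βth j))
          + (1/2) * ∑ j, d j * (β j - βhat j)^2)
    (hupd : f βtf + h βtf ≤ (1 - γ) * (f βhat + h βhat)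
        + γ * (f βtf + (h βth + ∑ j, sh j * (βtf j - βth j)))) :
    f βtf + h βtf ≤ f βhat + h βhat - (γ/2) * ∑ j, d j * (βtf j - βhat j)^2
    ∧ f βtf + h βtf ≤ f βhat + h βhat := by
  have hQ : (0:ℝ) ≤ ∑ j, d j * (βtf j - βhat j)^2 :=
    Finset.sum_nonneg fun j _ => mul_nonneg (hd j).le (sq_nonneg _)
  have h1 := hmin βhat
  have h2 := hsub βhat
  have hs : ∑ j, sh j * (βhat j - βth j) ≤ h βhat - h βth := by linarith
  have hz : ∑ j, d j * (βhat j - βhat j)^2 = 0 := by simp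
  rw [hz] at h1
  obtain ⟨hγ0, hγ1⟩ := hγ
  constructor
  · nlinarith
  · nlinarith
end

section
/- Let f, h : ℝ^p → ℝ be convex, let β̂ ∈ ℝ^p, let β̃_h ∈ ℝ^p, let s_h ∈ ∂h(β̃_h), and define h̃(β) = h(β̃_h) + ⟨s_h, β − β̃_h⟩. Suppose β̃_f minimizes β ↦ f(β) + h̃(β) + ½‖β − β̂‖²_D over ℝ^p and that the stopping criterion with ε = 0 is satisfied: f(β̃_f) + h̃(β̃_f) ≥ f(β̂) + h(β̂). Then β̃_f = β̂ and β̂ minimizes f + h over ℝ^p. -/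
/-- If `β̃_f` minimizes `f + h̃ + ½‖·−β̂‖²_D` (with `h̃` the linearization of `h`
at `β̃_h` via a subgradient `s_h`) and the stopping criterion with `ε = 0` holds, i.e.
`f(β̃_f)+h̃(β̃_f) ≥ f(β̂)+h(β̂)`, then `β̃_f = β̂` and `β̂` minimizes `f + h` over `ℝ^p`. -/
theorem stmt2 {p : ℕ} (f h : (Fin p → ℝ) → ℝ)
    (hf : ConvexOn ℝ Set.univ f) (hh : ConvexOn ℝ Set.univ h)
    (d : Fin p → ℝ) (hd : ∀ j, 0 < d j)
    (βhat βth sh βtf : Fin p → ℝ)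
    (hsub : ∀ y : Fin p → ℝ, h βth + ∑ j, sh j * (y j - βth j) ≤ h y)
    (hmin : ∀ β : Fin p → ℝ,
      f βtf + (h βth + ∑ j, sh j * (βtf j - βth j))
          + (1/2) * ∑ j, d j * (βtf j - βhat j)^2
        ≤ f β + (h βth + ∑ j, sh j * (β j - βth j))
          + (1/2) * ∑ j, d j * (β j - βhat j)^2)
    (hstop : f βhat + h βhat ≤ f βtf + (h βth + ∑ j, sh j * (βtf j - βth j))) :
    βtf = βhat ∧ ∀ β : Fin p → ℝ, f βhat + h βhat ≤ f β + h β := by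
  have hA := hmin βhat
  simp only [sub_self] at hA
  have hAsimp : f βtf + (h βth + ∑ j, sh j * (βtf j - βth j))
      + (1/2) * ∑ j, d j * (βtf j - βhat j)^2
      ≤ f βhat + (h βth + ∑ j, sh j * (βhat j - βth j)) := by
    have : ∑ j, d j * (βhat j - βhat j)^2 = 0 := by simp
    calc _ ≤ f βhat + (h βth + ∑ j, sh j * (βhat j - βth j))
          + (1/2) * ∑ j, d j * (βhat j - βhat j)^2 := hmin βhat
      _ = _ := by rw [this]; ring
  have hsubhat := hsub βhat
  -- Q(βtf) ≤ 0
  have hQle : (1/2) * ∑ j, d j * (βtf j - βhat j)^2 ≤ 0 := by linarith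
  have hQge : (0:ℝ) ≤ ∑ j, d j * (βtf j - βhat j)^2 :=
    Finset.sum_nonneg fun j _ => mul_nonneg (hd j).le (sq_nonneg _)
  have hQ0 : ∑ j, d j * (βtf j - βhat j)^2 = 0 := by linarith
  have heq : βtf = βhat := by
    funext j
    have hall := (Finset.sum_eq_zero_iff_of_nonneg
      (fun j _ => mul_nonneg (hd j).le (sq_nonneg (βtf j - βhat j)))).mp hQ0 j
      (Finset.mem_univ j)
    have : (βtf j - βhat j)^2 = 0 := by
      rcases mul_eq_zero.mp hall with h1 | h1
      · exact absurd h1 (hd j).ne'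
      · exact h1
    have := sq_eq_zero_iff.mp this
    linarith
  subst heq
  refine ⟨rfl, fun β => ?_⟩
  -- ht βhat = h βhat
  have hlin_eq : h βth + ∑ j, sh j * (βtf j - βth j) = h βtf := le_antisymm (hsub βtf) (by linarith)
  -- main step: ∀ ε > 0, f βtf + h βtf ≤ f β + h β + ε
  refine le_of_forall_pos_le_add fun ε hε => ?_
  set Q : ℝ := ∑ j, d j * (β j - βtf j)^2 with hQdef
  have hQnn : (0:ℝ) ≤ Q :=
    Finset.sum_nonneg fun j _ => mul_nonneg (hd j).le (sq_nonneg _)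
  set t : ℝ := min 1 (ε / (Q/2 + 1)) with htdef
  have ht0 : 0 < t := lt_min one_pos (div_pos hε (by linarith))
  have ht1 : t ≤ 1 := min_le_left _ _
  set βt : Fin p → ℝ := (1 - t) • βtf + t • β with hβt
  have hfconv : f βt ≤ (1 - t) * f βtf + t * f β := by
    have := hf.2 (Set.mem_univ βtf) (Set.mem_univ β) (show (0:ℝ) ≤ 1 - t by linarith) ht0.le (show (1 - t) + t = 1 by ring)
    simpa [smul_eq_mul] using this
  have hβtj : ∀ j, βt j = (1 - t) * βtf j + t * β j := by
    intro j; simp [hβt, Pi.smul_apply, smul_eq_mul]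
  have hlin : ∑ j, sh j * (βt j - βth j)
      = (1 - t) * ∑ j, sh j * (βtf j - βth j) + t * ∑ j, sh j * (β j - βth j) := by
    rw [Finset.mul_sum, Finset.mul_sum, ← Finset.sum_add_distrib]
    exact Finset.sum_congr rfl fun j _ => by rw [hβtj j]; ring
  have hquad : ∑ j, d j * (βt j - βtf j)^2 = t^2 * Q := by
    rw [hQdef, Finset.mul_sum]
    exact Finset.sum_congr rfl fun j _ => by rw [hβtj j]; ring
  have hM := hmin βt
  rw [hlin, hquad] at hM
  have hQtf : ∑ j, d j * (βtf j - βtf j)^2 = 0 := by simp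
  rw [hQtf] at hM
  -- hM : f βtf + (h βth + S(βtf)) + 0 ≤ f βt + (h βth + (1-t)*S(βtf) + t*S(β)) + (1/2)*(t^2*Q)
  have key : t * (f βtf + ∑ j, sh j * (βtf j - βth j))
      ≤ t * (f β + ∑ j, sh j * (β j - βth j) + t * (Q/2)) := by nlinarith [hfconv, hM]
  have key2 : f βtf + ∑ j, sh j * (βtf j - βth j)
      ≤ f β + ∑ j, sh j * (β j - βth j) + t * (Q/2) := le_of_mul_le_mul_left key ht0
  have hsubβ := hsub β
  have htQ : t * (Q/2) ≤ ε := by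
    have h1 : t ≤ ε / (Q/2 + 1) := min_le_right _ _
    have h2 : t * (Q/2) ≤ (ε / (Q/2 + 1)) * (Q/2) :=
      mul_le_mul_of_nonneg_right h1 (by linarith)
    have h3 : (ε / (Q/2 + 1)) * (Q/2) ≤ ε := by
      rw [div_mul_eq_mul_div, div_le_iff₀ (by linarith : (0:ℝ) < Q/2 + 1)]
      nlinarith
    linarith
  linarith [hlin_eq]
end

section
/- Let R be an m×p real matrix, s, β̂ ∈ ℝ^p, λ ≥ 0, and let D be a p×p diagonal matrix with positive diagonal entries. Then for every β ∈ ℝ^p and every μ ∈ ℝ^m with ‖μ‖_∞ ≤ λ, one has the weak duality inequality ⟨s, β⟩ + λ‖Rβ‖₁ + ½‖β − β̂‖²_D ≥ −½ μᵀ R D⁻¹ Rᵀ μ + ⟨μ, R(β̂ − D⁻¹s)⟩ + ⟨s, β̂⟩ − ½⟨s, D⁻¹s⟩. -/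
/-- weak duality for the h-subproblem: for every `β ∈ ℝ^p` and every
`μ ∈ ℝ^m` with `‖μ‖_∞ ≤ λ`,
`⟨s,β⟩ + λ‖Rβ‖₁ + ½‖β−β̂‖²_D ≥ −½ μᵀRD⁻¹Rᵀμ + ⟨μ, R(β̂−D⁻¹s)⟩ + ⟨s,β̂⟩ − ½⟨s,D⁻¹s⟩`. -/
theorem stmt9 {m p : ℕ} (R : Matrix (Fin m) (Fin p) ℝ)
    (s βhat : Fin p → ℝ) (lam : ℝ) (hlam : 0 ≤ lam)
    (d : Fin p → ℝ) (hd : ∀ j, 0 < d j) :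
    ∀ β : Fin p → ℝ, ∀ μ : Fin m → ℝ, (∀ i, |μ i| ≤ lam) →
      -(1/2) * (∑ i, μ i
            * ((R * Matrix.diagonal (fun j => (d j)⁻¹) * R.transpose).mulVec μ) i)
          + (∑ i, μ i * (R.mulVec (fun j => βhat j - s j / d j)) i)
          + (∑ j, s j * βhat j) - (1/2) * (∑ j, s j * (s j / d j))
        ≤ (∑ j, s j * β j) + lam * (∑ i, |R.mulVec β i|)
          + (1/2) * ∑ j, d j * (β j - βhat j)^2 := by
  intro β μ hμ
  set t : Fin p → ℝ := fun j => ∑ i, μ i * R i j with ht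
  -- Claim A
  have hA : (∑ i, μ i
        * ((R * Matrix.diagonal (fun j => (d j)⁻¹) * R.transpose).mulVec μ) i)
      = ∑ j, t j * t j * (d j)⁻¹ := by
    simp only [Matrix.mulVec, Matrix.mul_apply, dotProduct,
      Matrix.diagonal_apply, Matrix.transpose_apply, Finset.sum_mul,
      Finset.mul_sum, mul_ite, ite_mul, mul_zero, zero_mul,
      Finset.sum_ite_eq', Finset.mem_univ, if_true, ht]
    calc (∑ x : Fin m, ∑ x1 : Fin m, ∑ i : Fin p, μ x * (R x i * (d i)⁻¹ * R x1 i * μ x1))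
        = ∑ x : Fin m, ∑ i : Fin p, ∑ x1 : Fin m, μ x * (R x i * (d i)⁻¹ * R x1 i * μ x1) :=
          Finset.sum_congr rfl fun x _ => Finset.sum_comm
      _ = ∑ i : Fin p, ∑ x : Fin m, ∑ x1 : Fin m, μ x * (R x i * (d i)⁻¹ * R x1 i * μ x1) :=
          Finset.sum_comm
      _ = _ := by
            refine Finset.sum_congr rfl fun j _ => ?_
            refine Finset.sum_congr rfl fun a _ => ?_
            exact Finset.sum_congr rfl fun b _ => by ring
  -- Claim B
  have hB : (∑ i, μ i * (R.mulVec (fun j => βhat j - s j / d j)) i)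
      = ∑ j, t j * (βhat j - s j / d j) := by
    simp only [Matrix.mulVec, dotProduct, Finset.mul_sum, Finset.sum_mul, ht]
    rw [Finset.sum_comm]
    exact Finset.sum_congr rfl fun j _ => Finset.sum_congr rfl fun i _ => by ring
  -- Claim C
  have hC : (∑ i, μ i * (R.mulVec β) i) = ∑ j, t j * β j := by
    simp only [Matrix.mulVec, dotProduct, Finset.mul_sum, Finset.sum_mul, ht]
    rw [Finset.sum_comm]
    exact Finset.sum_congr rfl fun j _ => Finset.sum_congr rfl fun i _ => by ring
  -- Claim D
  have hD : (∑ j, t j * β j) ≤ lam * (∑ i, |R.mulVec β i|) := by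
    rw [← hC, Finset.mul_sum]
    refine Finset.sum_le_sum fun i _ => ?_
    calc μ i * R.mulVec β i ≤ |μ i * R.mulVec β i| := le_abs_self _
      _ = |μ i| * |R.mulVec β i| := abs_mul _ _
      _ ≤ lam * |R.mulVec β i| := by
          exact mul_le_mul_of_nonneg_right (hμ i) (abs_nonneg _)
  rw [hA, hB]
  have key : -(1/2) * (∑ j, t j * t j * (d j)⁻¹)
        + (∑ j, t j * (βhat j - s j / d j))
        + (∑ j, s j * βhat j) - (1/2) * (∑ j, s j * (s j / d j))
      ≤ (∑ j, s j * β j) + (∑ j, t j * β j)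
        + (1/2) * ∑ j, d j * (β j - βhat j)^2 := by
    have h1 : ∀ j, -(1/2) * (t j * t j * (d j)⁻¹) + t j * (βhat j - s j / d j)
        + s j * βhat j - (1/2) * (s j * (s j / d j))
        ≤ s j * β j + t j * β j + (1/2) * (d j * (β j - βhat j)^2) := by
      intro j
      have hdj := hd j
      have hdj' : (d j)⁻¹ = 1 / d j := by rw [one_div]
      have hsq : 0 ≤ (1/2) * d j * (β j - βhat j + (s j + t j) / d j)^2 :=
        mul_nonneg (by positivity) (sq_nonneg _)
      have hexp : (1/2) * d j * (β j - βhat j + (s j + t j) / d j)^2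
          = (s j * β j + t j * β j + (1/2) * (d j * (β j - βhat j)^2))
            - (-(1/2) * (t j * t j * (d j)⁻¹) + t j * (βhat j - s j / d j)
              + s j * βhat j - (1/2) * (s j * (s j / d j))) := by
        field_simp
        ring
      linarith [hexp ▸ hsq]
    calc _ = ∑ j, (-(1/2) * (t j * t j * (d j)⁻¹) + t j * (βhat j - s j / d j)
            + s j * βhat j - (1/2) * (s j * (s j / d j))) := by
          simp only [Finset.sum_add_distrib, Finset.sum_sub_distrib, Finset.mul_sum]
      _ ≤ ∑ j, (s j * β j + t j * β j + (1/2) * (d j * (β j - βhat j)^2)) :=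
          Finset.sum_le_sum fun j _ => h1 j
      _ = _ := by
          simp only [Finset.sum_add_distrib, Finset.mul_sum]
  linarith
end

section
/- Let R be an m×p real matrix, s, β̂ ∈ ℝ^p, λ ≥ 0, and let D be a p×p diagonal matrix with positive diagonal entries. Then strong duality holds for the h-subproblem of the alternating linearization method: the minimum over β ∈ ℝ^p of ⟨s, β⟩ + λ‖Rβ‖₁ + ½‖β − β̂‖²_D equals the maximum over μ ∈ ℝ^m with ‖μ‖_∞ ≤ λ of −½ μᵀ R D⁻¹ Rᵀ μ + ⟨μ, R(β̂ − D⁻¹s)⟩, plus the constant ⟨s, β̂⟩ − ½⟨s, D⁻¹s⟩; both the minimum and the maximum are attained. -/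
/-!
The dual objective plus the constant is `μ ↦ quadMin d β̂ (s + Rᵀμ)`, the minimum over `β` of the
Lagrangian `⟨s + Rᵀμ, β⟩ + ½‖β − β̂‖²_D`, attained at `β̂ − D⁻¹(s + Rᵀμ)`. Since `⟨μ, Rβ⟩ ≤ λ‖Rβ‖₁`
on the box, this gives weak duality. The dual is continuous, so it has a maximiser `μ*` on the
compact box; the dual being a concave quadratic, first-order optimality of `μ*` in the direction
`λ · sign(Rβ*) − μ*` yields `λ‖Rβ*‖₁ = ⟨μ*, Rβ*⟩` for `β* = β̂ − D⁻¹(s + Rᵀμ*)`, so the gap vanishes.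
-/

open Matrix

lemma nonpos_of_forall_mul_le_sq_mul {a c : ℝ} (hc : 0 ≤ c)
    (h : ∀ t : ℝ, 0 < t → t ≤ 1 → t * a ≤ t ^ 2 * c) : a ≤ 0 := by
  by_contra! ha
  have hac : 0 < a + c := by linarith
  have := h (a / (a + c)) (by positivity) ((div_le_one hac).2 (by linarith))
  rw [div_pow, ← mul_div_right_comm, ← mul_div_right_comm,
    div_le_div_iff₀ hac (by positivity)] at this
  nlinarith [mul_pos ha ha, mul_pos (mul_pos ha ha) ha]

section Box

variable {κ : Type*} [Fintype κ] {lam : ℝ}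

lemma mem_closedBall_zero_iff_forall_abs_le (hlam : 0 ≤ lam) {μ : κ → ℝ} :
    μ ∈ Metric.closedBall 0 lam ↔ ∀ i, |μ i| ≤ lam := by
  simp only [mem_closedBall_zero_iff, pi_norm_le_iff_of_nonneg hlam, Real.norm_eq_abs]

lemma dotProduct_le_mul_sum_abs {μ : κ → ℝ} (hμ : ∀ i, |μ i| ≤ lam) (x : κ → ℝ) :
    μ ⬝ᵥ x ≤ lam * ∑ i, |x i| := by
  rw [Finset.mul_sum]
  refine Finset.sum_le_sum fun i _ => ?_
  calc μ i * x i ≤ |μ i| * |x i| := by rw [← abs_mul]; exact le_abs_self _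
    _ ≤ lam * |x i| := mul_le_mul_of_nonneg_right (hμ i) (abs_nonneg _)

lemma exists_forall_abs_le_dotProduct_eq (hlam : 0 ≤ lam) (x : κ → ℝ) :
    ∃ ν : κ → ℝ, (∀ i, |ν i| ≤ lam) ∧ ν ⬝ᵥ x = lam * ∑ i, |x i| := by
  refine ⟨fun i => if 0 ≤ x i then lam else -lam, fun i => ?_, ?_⟩
  · dsimp only
    split_ifs <;> simp [abs_of_nonneg hlam]
  · rw [Finset.mul_sum]
    refine Finset.sum_congr rfl fun i _ => ?_
    dsimp only
    split_ifs with h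
    · rw [abs_of_nonneg h]
    · rw [abs_of_neg (not_le.1 h)]; ring

end Box

section QuadMin

variable {ι : Type*} [Fintype ι] (d b : ι → ℝ)

/-- `quadArgmin d b y` and `quadMin d b y` are the minimiser and the minimum of
`β ↦ ⟨y, β⟩ + ½ ∑ⱼ dⱼ (βⱼ − bⱼ)²` when `d > 0`. -/
noncomputable def quadArgmin (y : ι → ℝ) : ι → ℝ := fun j => b j - y j / d j

noncomputable def quadMin (y : ι → ℝ) : ℝ := ∑ j, (y j * b j - y j ^ 2 / (2 * d j))

variable {d}

lemma dotProduct_add_half_sum_sq_eq (hd : ∀ j, d j ≠ 0) (y β : ι → ℝ) :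
    y ⬝ᵥ β + 1 / 2 * ∑ j, d j * (β j - b j) ^ 2
      = quadMin d b y + 1 / 2 * ∑ j, d j * (β j - quadArgmin d b y j) ^ 2 := by
  simp only [dotProduct, quadMin, quadArgmin, Finset.mul_sum, ← Finset.sum_add_distrib]
  refine Finset.sum_congr rfl fun j _ => ?_
  field_simp [hd j]
  ring

lemma quadMin_add_smul (hd : ∀ j, d j ≠ 0) (y w : ι → ℝ) (t : ℝ) :
    quadMin d b (y + t • w)
      = quadMin d b y + t * (w ⬝ᵥ quadArgmin d b y) - t ^ 2 * ∑ j, w j ^ 2 / (2 * d j) := by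
  simp only [dotProduct, quadMin, quadArgmin, Finset.mul_sum, ← Finset.sum_add_distrib,
    ← Finset.sum_sub_distrib, Pi.add_apply, Pi.smul_apply, smul_eq_mul]
  refine Finset.sum_congr rfl fun j _ => ?_
  field_simp [hd j]
  ring

end QuadMin

section Duality

variable {ι κ : Type*} [Fintype ι] [Fintype κ] {d : ι → ℝ} (b : ι → ℝ)
  (R : Matrix κ ι ℝ) (s : ι → ℝ)

lemma dual_add_eq_quadMin [DecidableEq ι] (hd : ∀ j, d j ≠ 0) (μ : κ → ℝ) :
    -(1 / 2) * (μ ⬝ᵥ (R * diagonal (fun j => (d j)⁻¹) * Rᵀ) *ᵥ μ)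
        + μ ⬝ᵥ R *ᵥ (fun j => b j - s j / d j) + s ⬝ᵥ b - 1 / 2 * ∑ j, s j * (s j / d j)
      = quadMin d b (s + μ ᵥ* R) := by
  simp only [← mulVec_mulVec, dotProduct_mulVec μ R, mulVec_transpose]
  simp only [dotProduct, quadMin, mulVec_diagonal, Pi.add_apply, Finset.mul_sum,
    ← Finset.sum_add_distrib, ← Finset.sum_sub_distrib]
  refine Finset.sum_congr rfl fun j _ => ?_
  field_simp [hd j]
  ring

lemma continuous_quadMin_add_vecMul : Continuous fun μ : κ → ℝ => quadMin d b (s + μ ᵥ* R) := by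
  unfold quadMin
  fun_prop

lemma primal_eq_quadMin_add_gap (hd : ∀ j, d j ≠ 0) (lam : ℝ) (μ : κ → ℝ) (β : ι → ℝ) :
    s ⬝ᵥ β + lam * ∑ i, |(R *ᵥ β) i| + 1 / 2 * ∑ j, d j * (β j - b j) ^ 2
      = quadMin d b (s + μ ᵥ* R) + 1 / 2 * ∑ j, d j * (β j - quadArgmin d b (s + μ ᵥ* R) j) ^ 2
        + (lam * ∑ i, |(R *ᵥ β) i| - μ ⬝ᵥ R *ᵥ β) := by
  have := dotProduct_add_half_sum_sq_eq b hd (s + μ ᵥ* R) β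
  rw [add_dotProduct, ← dotProduct_mulVec] at this
  linarith

lemma IsMaxOn.sub_dotProduct_mulVec_quadArgmin_nonpos (hd : ∀ j, 0 < d j) {K : Set (κ → ℝ)}
    (hK : Convex ℝ K) {μ ν : κ → ℝ} (hμ : μ ∈ K)
    (hmax : IsMaxOn (fun μ => quadMin d b (s + μ ᵥ* R)) K μ) (hν : ν ∈ K) :
    (ν - μ) ⬝ᵥ R *ᵥ quadArgmin d b (s + μ ᵥ* R) ≤ 0 := by
  have hd' : ∀ j, d j ≠ 0 := fun j => (hd j).ne'
  refine nonpos_of_forall_mul_le_sq_mul (c := ∑ j, ((ν - μ) ᵥ* R) j ^ 2 / (2 * d j))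
    (Finset.sum_nonneg fun j _ => by have := hd j; positivity) fun t ht0 ht1 => ?_
  have hle : quadMin d b (s + (μ + t • (ν - μ)) ᵥ* R) ≤ quadMin d b (s + μ ᵥ* R) :=
    hmax (hK.add_smul_sub_mem hμ hν ⟨ht0.le, ht1⟩)
  rw [add_vecMul, smul_vecMul, ← add_assoc, quadMin_add_smul b hd', ← dotProduct_mulVec] at hle
  linarith

lemma IsMaxOn.mul_sum_abs_mulVec_quadArgmin_eq (hd : ∀ j, 0 < d j) {lam : ℝ} (hlam : 0 ≤ lam)
    {μ : κ → ℝ} (hμ : μ ∈ Metric.closedBall 0 lam)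
    (hmax : IsMaxOn (fun μ => quadMin d b (s + μ ᵥ* R)) (Metric.closedBall 0 lam) μ) :
    lam * ∑ i, |(R *ᵥ quadArgmin d b (s + μ ᵥ* R)) i|
      = μ ⬝ᵥ R *ᵥ quadArgmin d b (s + μ ᵥ* R) := by
  set x := R *ᵥ quadArgmin d b (s + μ ᵥ* R)
  obtain ⟨ν, hν, hνx⟩ := exists_forall_abs_le_dotProduct_eq hlam x
  have hfoc := hmax.sub_dotProduct_mulVec_quadArgmin_nonpos b R s hd (convex_closedBall 0 lam) hμ
    ((mem_closedBall_zero_iff_forall_abs_le hlam).2 hν)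
  rw [sub_dotProduct] at hfoc
  exact le_antisymm (by linarith)
    (dotProduct_le_mul_sum_abs ((mem_closedBall_zero_iff_forall_abs_le hlam).1 hμ) x)

end Duality

/-- strong duality for the h-subproblem: the minimum of the primal objective
`β ↦ ⟨s,β⟩ + λ‖Rβ‖₁ + ½‖β−β̂‖²_D` is attained, the maximum of the dual objective
`μ ↦ −½ μᵀRD⁻¹Rᵀμ + ⟨μ, R(β̂−D⁻¹s)⟩` over the box `‖μ‖_∞ ≤ λ` is attained, and the optimal
primal value equals the optimal dual value plus the constant `⟨s,β̂⟩ − ½⟨s,D⁻¹s⟩`. -/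
theorem stmt10 {m p : ℕ} (R : Matrix (Fin m) (Fin p) ℝ)
    (s βhat : Fin p → ℝ) (lam : ℝ) (hlam : 0 ≤ lam)
    (d : Fin p → ℝ) (hd : ∀ j, 0 < d j)
    (P : (Fin p → ℝ) → ℝ)
    (hP : ∀ β : Fin p → ℝ, P β = (∑ j, s j * β j) + lam * (∑ i, |R.mulVec β i|)
        + (1/2) * ∑ j, d j * (β j - βhat j)^2)
    (Dl : (Fin m → ℝ) → ℝ)
    (hDl : ∀ μ : Fin m → ℝ, Dl μ = -(1/2) * (∑ i, μ i
          * ((R * Matrix.diagonal (fun j => (d j)⁻¹) * R.transpose).mulVec μ) i)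
        + ∑ i, μ i * (R.mulVec (fun j => βhat j - s j / d j)) i) :
    ∃ βstar : Fin p → ℝ, ∃ μstar : Fin m → ℝ,
      (∀ β, P βstar ≤ P β) ∧
      (∀ i, |μstar i| ≤ lam) ∧
      (∀ μ : Fin m → ℝ, (∀ i, |μ i| ≤ lam) → Dl μ ≤ Dl μstar) ∧
      P βstar = Dl μstar + (∑ j, s j * βhat j) - (1/2) * ∑ j, s j * (s j / d j) := by
  have hd' : ∀ j, d j ≠ 0 := fun j => (hd j).ne'
  have hball (μ : Fin m → ℝ) := mem_closedBall_zero_iff_forall_abs_le hlam (μ := μ)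
  have hDlquad (μ : Fin m → ℝ) : Dl μ + (∑ j, s j * βhat j) - (1/2) * ∑ j, s j * (s j / d j)
      = quadMin d βhat (s + μ ᵥ* R) := by
    rw [hDl]; exact dual_add_eq_quadMin βhat R s hd' μ
  obtain ⟨μstar, hμstar, hmax⟩ := (isCompact_closedBall (0 : Fin m → ℝ) lam).exists_isMaxOn
    (Metric.nonempty_closedBall.2 hlam) (continuous_quadMin_add_vecMul βhat R s).continuousOn
  set βstar := quadArgmin d βhat (s + μstar ᵥ* R)
  have hPgap (β : Fin p → ℝ) := (hP β).trans (primal_eq_quadMin_add_gap βhat R s hd' lam μstar β)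
  have hPstar : P βstar = quadMin d βhat (s + μstar ᵥ* R) := by
    rw [hPgap, hmax.mul_sum_abs_mulVec_quadArgmin_eq βhat R s hd hlam hμstar]
    simp [βstar]
  have hPge (β : Fin p → ℝ) : quadMin d βhat (s + μstar ᵥ* R) ≤ P β := by
    have hsq : 0 ≤ ∑ j, d j * (β j - βstar j) ^ 2 :=
      Finset.sum_nonneg fun j _ => mul_nonneg (hd j).le (sq_nonneg _)
    have hgap := dotProduct_le_mul_sum_abs ((hball μstar).1 hμstar) (R *ᵥ β)
    rw [hPgap]
    linarith
  refine ⟨βstar, μstar, fun β => hPstar ▸ hPge β, (hball μstar).1 hμstar,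
    fun μ hμ => ?_, by linarith [hDlquad μstar]⟩
  have hle : quadMin d βhat (s + μ ᵥ* R) ≤ quadMin d βhat (s + μstar ᵥ* R) :=
    hmax ((hball μ).2 hμ)
  linarith [hDlquad μ, hDlquad μstar]
end

section
/- Let R be an m×p real matrix, y ∈ ℝ^p, and λ ≥ 0. Suppose μ* maximizes μ ↦ −½ μᵀ R Rᵀ μ + ⟨μ, Ry⟩ over the box {μ ∈ ℝ^m : ‖μ‖_∞ ≤ λ}. Then β* = y − Rᵀμ* minimizes the generalized lasso objective β ↦ ½‖β − y‖₂² + λ‖Rβ‖₁ over ℝ^p. (Thus for the identity design matrix X = I, the alternating linearization method started at β̂ = y solves the problem exactly in one iteration.) -/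
/-- if `μ*` maximizes `μ ↦ −½ μᵀRRᵀμ + ⟨μ, Ry⟩` over the box
`{μ : ‖μ‖_∞ ≤ λ}`, then `β* = y − Rᵀμ*` minimizes the generalized lasso objective
`β ↦ ½‖β−y‖₂² + λ‖Rβ‖₁` over `ℝ^p`. -/
theorem stmt12 {m p : ℕ} (R : Matrix (Fin m) (Fin p) ℝ)
    (y : Fin p → ℝ) (lam : ℝ) (hlam : 0 ≤ lam)
    (μstar : Fin m → ℝ) (hbox : ∀ i, |μstar i| ≤ lam)
    (hdualmax : ∀ μ : Fin m → ℝ, (∀ i, |μ i| ≤ lam) →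
      -(1/2) * (∑ i, μ i * ((R * R.transpose).mulVec μ) i) + (∑ i, μ i * R.mulVec y i)
        ≤ -(1/2) * (∑ i, μstar i * ((R * R.transpose).mulVec μstar) i)
          + (∑ i, μstar i * R.mulVec y i))
    (βstar : Fin p → ℝ) (hβstar : βstar = y - R.transpose.mulVec μstar) :
    ∀ β : Fin p → ℝ,
      (1/2) * (∑ j, (βstar j - y j)^2) + lam * (∑ i, |R.mulVec βstar i|)
        ≤ (1/2) * (∑ j, (β j - y j)^2) + lam * (∑ i, |R.mulVec β i|) := by
  classical
  intro β
  -- dot-product transposition identity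
  have dp : ∀ (v : Fin m → ℝ) (z : Fin p → ℝ),
      ∑ i, v i * R.mulVec z i = ∑ j, R.transpose.mulVec v j * z j := by
    intro v z
    have := Matrix.dotProduct_mulVec v R z
    simpa [dotProduct, Matrix.mulVec_transpose] using this
  -- the dual objective rewritten in terms of w = Rᵀ μ
  have Gconv : ∀ μ : Fin m → ℝ,
      -(1/2) * (∑ i, μ i * ((R * R.transpose).mulVec μ) i) + (∑ i, μ i * R.mulVec y i)
        = ∑ j, (-(1/2) * (R.transpose.mulVec μ j)^2 + R.transpose.mulVec μ j * y j) := by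
    intro μ
    have h1 : ∑ i, μ i * ((R * R.transpose).mulVec μ) i
        = ∑ j, (R.transpose.mulVec μ j)^2 := by
      rw [← Matrix.mulVec_mulVec, dp μ (R.transpose.mulVec μ)]
      exact Finset.sum_congr rfl fun j _ => (sq _).symm
    rw [h1, dp μ y, Finset.mul_sum, ← Finset.sum_add_distrib]
  -- quadratic expansion along a line
  have sum_split : ∀ (u v : Fin p → ℝ) (t : ℝ),
      ∑ j, (-(1/2) * (v j + t * u j)^2 + (v j + t * u j) * y j)
        = (∑ j, (-(1/2) * (v j)^2 + v j * y j)) + t * (∑ j, u j * (y j - v j))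
          - t^2/2 * (∑ j, (u j)^2) := by
    intro u v t
    rw [Finset.mul_sum, Finset.mul_sum, ← Finset.sum_add_distrib, ← Finset.sum_sub_distrib]
    exact Finset.sum_congr rfl fun j _ => by ring
  subst hβstar
  set w : Fin p → ℝ := R.transpose.mulVec μstar with hw
  set c : Fin m → ℝ := R.mulVec (y - w) with hc
  -- complementary slackness
  have comp : ∀ i, lam * |c i| = μstar i * c i := by
    intro i
    by_contra hne
    set a : ℝ := lam * |c i| - μstar i * c i with ha
    have ha0 : 0 ≤ a := by
      have h1 : μstar i * c i ≤ |μstar i| * |c i| := by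
        calc μstar i * c i ≤ |μstar i * c i| := le_abs_self _
          _ = |μstar i| * |c i| := abs_mul _ _
      nlinarith [abs_nonneg (c i), hbox i]
    have hapos : 0 < a := lt_of_le_of_ne ha0 (fun h => hne (by rw [ha] at h; linarith))
    set s : ℝ := if 0 ≤ c i then lam else -lam with hs
    have hsabs : |s| ≤ lam := by
      rw [hs]; split_ifs <;>
        simp [abs_of_nonneg hlam, abs_of_nonpos (neg_nonpos.mpr hlam)]
    have hsc : s * c i = lam * |c i| := by
      rw [hs]; split_ifs with h
      · rw [abs_of_nonneg h]
      · rw [abs_of_neg (lt_of_not_ge h)]; ring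
    set d : Fin m → ℝ := fun k => if k = i then s - μstar i else 0 with hd
    set u : Fin p → ℝ := R.transpose.mulVec d with hu
    set b : ℝ := ∑ j, (u j)^2 with hb
    have hb0 : 0 ≤ b := Finset.sum_nonneg fun j _ => sq_nonneg _
    have hT : 0 < a + b := by linarith
    set t : ℝ := a / (a + b) with ht
    have htpos : 0 < t := div_pos hapos hT
    have ht1 : t ≤ 1 := by rw [ht, div_le_one hT]; linarith
    have hfeas : ∀ k, |(μstar + t • d) k| ≤ lam := by
      intro k
      by_cases hk : k = i
      · subst hk
        have hval : (μstar + t • d) k = (1 - t) * μstar k + t * s := by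
          simp [hd]
          ring
        rw [hval]
        calc |(1 - t) * μstar k + t * s| ≤ |(1 - t) * μstar k| + |t * s| := abs_add_le _ _
          _ = (1 - t) * |μstar k| + t * |s| := by
              rw [abs_mul, abs_mul, abs_of_nonneg (by linarith : (0:ℝ) ≤ 1 - t),
                abs_of_nonneg htpos.le]
          _ ≤ (1 - t) * lam + t * lam := by
              have h1 := hbox k
              nlinarith
          _ = lam := by ring
      · have hval : (μstar + t • d) k = μstar k := by simp [hd, hk]
        rw [hval]; exact hbox k
    have hGt := hdualmax (μstar + t • d) hfeas
    rw [Gconv, Gconv] at hGt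
    rw [← hw] at hGt
    have hlin : R.transpose.mulVec (μstar + t • d) = fun j => w j + t * u j := by
      funext j
      rw [Matrix.mulVec_add, Matrix.mulVec_smul]
      simp [hw, hu]
    simp only [hlin] at hGt
    rw [sum_split u w t] at hGt
    have hSa : ∑ j, u j * (y j - w j) = a := by
      have h1 := dp d (y - w)
      rw [← hc, ← hu] at h1
      have h2 : ∑ j, u j * (y j - w j) = ∑ j, u j * (y - w) j :=
        Finset.sum_congr rfl fun j _ => by rw [Pi.sub_apply]
      have h3 : ∑ i', d i' * c i' = (s - μstar i) * c i := by
        rw [Finset.sum_eq_single i]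
        · simp [hd]
        · intro k _ hk; simp [hd, hk]
        · intro h; exact absurd (Finset.mem_univ i) h
      have h4 : (s - μstar i) * c i = a := by rw [ha, ← hsc]; ring
      rw [h2, ← h1, h3, h4]
    rw [hSa] at hGt
    have hkey : t * a - t^2/2 * b ≤ 0 := by linarith
    have h5 : t * b < a := by
      rw [ht, div_mul_eq_mul_div, div_lt_iff₀ hT]; nlinarith
    have h6 : a ≤ t * b / 2 :=
      le_of_mul_le_mul_left (by linear_combination hkey) htpos
    linarith
  -- main inequality
  have e1 : ∑ j, ((y - w) j - y j)^2 = ∑ j, (w j)^2 :=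
    Finset.sum_congr rfl fun j _ => by rw [Pi.sub_apply]; ring
  have e2 : lam * ∑ i, |c i| = ∑ j, w j * (y j - w j) := by
    rw [Finset.mul_sum]
    have h0 : ∑ i, lam * |c i| = ∑ i, μstar i * c i :=
      Finset.sum_congr rfl fun i _ => comp i
    rw [h0]
    have h1 := dp μstar (y - w)
    rw [← hc, ← hw] at h1
    rw [h1]
    exact Finset.sum_congr rfl fun j _ => by rw [Pi.sub_apply]
  have e4 : ∑ i, μstar i * R.mulVec β i = ∑ j, w j * β j := by
    have := dp μstar β
    rwa [← hw] at this
  have h5 : ∑ i, μstar i * R.mulVec β i ≤ lam * ∑ i, |R.mulVec β i| := by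
    rw [Finset.mul_sum]
    refine Finset.sum_le_sum fun i _ => ?_
    calc μstar i * R.mulVec β i ≤ |μstar i * R.mulVec β i| := le_abs_self _
      _ = |μstar i| * |R.mulVec β i| := abs_mul _ _
      _ ≤ lam * |R.mulVec β i| := mul_le_mul_of_nonneg_right (hbox i) (abs_nonneg _)
  have sqex : ∑ j, (1/2:ℝ) * (β j - y j + w j)^2
      = (1/2) * (∑ j, (β j - y j)^2) + (∑ j, w j * β j) - (∑ j, w j * (y j - w j))
        - (1/2) * (∑ j, (w j)^2) := by
    rw [Finset.mul_sum, Finset.mul_sum, ← Finset.sum_add_distrib,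
      ← Finset.sum_sub_distrib, ← Finset.sum_sub_distrib]
    exact Finset.sum_congr rfl fun j _ => by ring
  have nn : 0 ≤ ∑ j, (1/2:ℝ) * (β j - y j + w j)^2 :=
    Finset.sum_nonneg fun j _ => by positivity
  rw [e1, e2]
  linarith
end

section
/- Let X be an n×p real matrix, R an m×p real matrix, y ∈ ℝ^n, and λ ≥ 0. Then the generalized lasso objective L(β) = ½‖y − Xβ‖₂² + λ‖Rβ‖₁ attains its minimum over ℝ^p, i.e., the set of minima of L is nonempty. (In particular, for R = I the lasso objective ½‖y − Xβ‖₂² + λ‖β‖₁ attains its minimum.) -/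
open Filter Topology

/-- Minimum of a coercive continuous function over the range of a linear map. -/
lemma min_on_range {p : ℕ} {F : Type*} [NormedAddCommGroup F] [NormedSpace ℝ F]
    [FiniteDimensional ℝ F]
    (T : (Fin p → ℝ) →ₗ[ℝ] F) (f : F → ℝ) (hf : Continuous f)
    (hcoer : Tendsto f (cocompact F) atTop) :
    ∃ b : Fin p → ℝ, ∀ c : Fin p → ℝ, f (T b) ≤ f (T c) := by
  set W := LinearMap.range T with hW
  have hWclosed : IsClosed (W : Set F) := Submodule.closed_of_finiteDimensional W
  have hemb : Topology.IsClosedEmbedding ((↑) : W → F) :=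
    hWclosed.isClosedEmbedding_subtypeVal
  have hco : Tendsto ((↑) : W → F) (cocompact W) (cocompact F) := hemb.tendsto_cocompact
  have hg : Continuous (fun w : W => f w) := hf.comp continuous_subtype_val
  have hgc : Tendsto (fun w : W => f w) (cocompact W) atTop := hcoer.comp hco
  obtain ⟨w, hw⟩ := hg.exists_forall_le hgc
  obtain ⟨b, hb⟩ := w.2
  refine ⟨b, fun c => ?_⟩
  have := hw ⟨T c, ⟨c, rfl⟩⟩
  simpa [hb] using this

lemma sup_norm_sq_le {n : ℕ} (x : Fin n → ℝ) : ‖x‖ ^ 2 ≤ ∑ i, (x i) ^ 2 := by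
  have hs : 0 ≤ ∑ i, (x i) ^ 2 := Finset.sum_nonneg fun i _ => sq_nonneg _
  have h : ‖x‖ ≤ Real.sqrt (∑ i, (x i) ^ 2) := by
    rw [pi_norm_le_iff_of_nonneg (Real.sqrt_nonneg _)]
    intro i
    rw [Real.norm_eq_abs, Real.le_sqrt (abs_nonneg _) hs, sq_abs]
    exact Finset.single_le_sum (fun j _ => sq_nonneg (x j)) (Finset.mem_univ i)
  calc ‖x‖ ^ 2 ≤ Real.sqrt (∑ i, (x i) ^ 2) ^ 2 := by
        exact pow_le_pow_left₀ (norm_nonneg _) h 2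
    _ = ∑ i, (x i) ^ 2 := Real.sq_sqrt hs

lemma sup_norm_le_sum_abs {m : ℕ} (v : Fin m → ℝ) : ‖v‖ ≤ ∑ i, |v i| := by
  rw [pi_norm_le_iff_of_nonneg (Finset.sum_nonneg fun i _ => abs_nonneg _)]
  intro i
  rw [Real.norm_eq_abs]
  exact Finset.single_le_sum (fun j _ => abs_nonneg (v j)) (Finset.mem_univ i)

lemma quad_coer (c : ℝ) : Tendsto (fun t : ℝ => (1/2) * (max (t - c) 0) ^ 2) atTop atTop := by
  have h1 : Tendsto (fun t : ℝ => max (t - c) 0) atTop atTop :=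
    tendsto_atTop_mono (fun t => le_max_left _ _) (tendsto_atTop_add_const_right _ _ tendsto_id)
  have h2 : Tendsto (fun s : ℝ => (1/2) * s ^ 2) atTop atTop := by
    exact (tendsto_pow_atTop two_ne_zero).const_mul_atTop (by norm_num)
  exact h2.comp h1

/-- pointwise lower bound for the least-squares term -/
lemma ls_lb {n : ℕ} (y u : Fin n → ℝ) :
    (1/2) * (max (‖u‖ - ‖y‖) 0) ^ 2 ≤ (1/2) * (∑ i, (y i - u i) ^ 2) := by
  have h1 : max (‖u‖ - ‖y‖) 0 ≤ ‖y - u‖ := by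
    apply max_le _ (norm_nonneg _)
    calc ‖u‖ - ‖y‖ ≤ ‖u - y‖ := norm_sub_norm_le u y
      _ = ‖y - u‖ := norm_sub_rev u y
  have h2 : ‖y - u‖ ^ 2 ≤ ∑ i, (y i - u i) ^ 2 := by
    have := sup_norm_sq_le (y - u)
    simpa using this
  have h3 : (max (‖u‖ - ‖y‖) 0) ^ 2 ≤ ‖y - u‖ ^ 2 :=
    pow_le_pow_left₀ (le_max_right _ _) h1 2
  nlinarith

/-- the generalized lasso objective `L(β) = ½‖y−Xβ‖₂² + λ‖Rβ‖₁` attains its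
minimum over `ℝ^p`, i.e., its set of minima is nonempty. -/
theorem stmt13 {n m p : ℕ} (X : Matrix (Fin n) (Fin p) ℝ) (R : Matrix (Fin m) (Fin p) ℝ)
    (y : Fin n → ℝ) (lam : ℝ) (hlam : 0 ≤ lam) :
    ∃ βstar : Fin p → ℝ, ∀ β : Fin p → ℝ,
      (1/2) * (∑ i, (y i - X.mulVec βstar i)^2) + lam * (∑ i, |R.mulVec βstar i|)
        ≤ (1/2) * (∑ i, (y i - X.mulVec β i)^2) + lam * (∑ i, |R.mulVec β i|) := by
  rcases hlam.eq_or_lt with h0 | hpos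
  · -- lam = 0
    subst h0
    simp only [zero_mul, add_zero]
    set f : (Fin n → ℝ) → ℝ := fun u => (1/2) * (∑ i, (y i - u i) ^ 2) with hfdef
    have hf : Continuous f := by
      apply Continuous.mul continuous_const
      apply continuous_finset_sum
      intro i _
      exact ((continuous_const.sub (continuous_apply i)).pow 2)
    have hcoer : Tendsto f (cocompact (Fin n → ℝ)) atTop :=
      tendsto_atTop_mono (fun u => ls_lb y u)
        ((quad_coer ‖y‖).comp tendsto_norm_cocompact_atTop)
    obtain ⟨b, hb⟩ := min_on_range X.mulVecLin f hf hcoer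
    exact ⟨b, fun c => hb c⟩
  · -- lam > 0
    set F := (Fin n → ℝ) × (Fin m → ℝ)
    set T : (Fin p → ℝ) →ₗ[ℝ] F := (X.mulVecLin).prod (R.mulVecLin) with hT
    set f : F → ℝ := fun uv =>
      (1/2) * (∑ i, (y i - uv.1 i) ^ 2) + lam * (∑ i, |uv.2 i|) with hfdef
    have hf : Continuous f := by
      apply Continuous.add
      · apply Continuous.mul continuous_const
        apply continuous_finset_sum
        intro i _
        exact ((continuous_const.sub ((continuous_apply i).comp continuous_fst)).pow 2)
      · apply Continuous.mul continuous_const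
        apply continuous_finset_sum
        intro i _
        exact (((continuous_apply i).comp continuous_snd)).abs
    have hnn1 : ∀ uv : F, 0 ≤ (1/2) * (∑ i, (y i - uv.1 i) ^ 2) := fun uv =>
      mul_nonneg (by norm_num) (Finset.sum_nonneg fun i _ => sq_nonneg _)
    have hnn2 : ∀ uv : F, 0 ≤ lam * (∑ i, |uv.2 i|) := fun uv =>
      mul_nonneg hlam (Finset.sum_nonneg fun i _ => abs_nonneg _)
    -- coercivity
    have hgt : Tendsto (fun t : ℝ => min ((1/2) * (max (t - ‖y‖) 0) ^ 2) (lam * t))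
        atTop atTop := by
      rw [tendsto_atTop]
      intro b
      have e1 := (tendsto_atTop.1 (quad_coer ‖y‖)) b
      have e2 := (tendsto_atTop.1 (tendsto_id.const_mul_atTop hpos)) b
      filter_upwards [e1, e2] with t h1 h2
      exact le_min h1 h2
    have hpt : ∀ uv : F,
        min ((1/2) * (max (‖uv‖ - ‖y‖) 0) ^ 2) (lam * ‖uv‖) ≤ f uv := by
      intro uv
      rw [Prod.norm_def]
      rcases max_cases ‖uv.1‖ ‖uv.2‖ with ⟨heq, _⟩ | ⟨heq, _⟩
      · rw [heq]
        refine le_trans (min_le_left _ _) ?_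
        calc (1/2) * (max (‖uv.1‖ - ‖y‖) 0) ^ 2 ≤ (1/2) * (∑ i, (y i - uv.1 i) ^ 2) :=
              ls_lb y uv.1
          _ ≤ f uv := le_add_of_nonneg_right (hnn2 uv)
      · rw [heq]
        refine le_trans (min_le_right _ _) ?_
        calc lam * ‖uv.2‖ ≤ lam * (∑ i, |uv.2 i|) :=
              mul_le_mul_of_nonneg_left (sup_norm_le_sum_abs uv.2) hlam
          _ ≤ f uv := le_add_of_nonneg_left (hnn1 uv)
    have hcoer : Tendsto f (cocompact F) atTop :=
      tendsto_atTop_mono hpt (hgt.comp tendsto_norm_cocompact_atTop)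
    obtain ⟨b, hb⟩ := min_on_range T f hf hcoer
    exact ⟨b, fun c => hb c⟩
end
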